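/- arXiv:2509.09648 — 2 statements merged into one kernel-verified Lean document; each statement's English description precedes it below -/
import Mathlib

section
/- As p → 1⁺, the maximum of u_p satisfies ‖u_p‖_∞^{p-1} = u_p(0)^{p-1} → π²/4, where π²/4 is the first Dirichlet eigenvalue of -d²/dt² on (-1,1). -/
/-!
Compare `u = u_p` with `cos (k t)`, `k = π / (2a)`, the first Dirichlet eigenfunction on `(-a, a)`:
the Wronskian-type quantity `k u sin (k t) + u' cos (k t)` has derivative `cos (k t) (u'' + k² u)`,
so a sign of `u'' + k² u = u (k² - u^(p-1))` on `(-a, a)` forces the same sign on `u(-a) + u(a)`.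
With `a = 1` this gives `u(0)^(p-1) ≥ π²/4`; for `a < 1` it gives `u(a)^(p-1) ≤ π²/(4a²)`, and
concavity, `u(a) ≥ (1 - a) u(0)`, turns the latter into `u(0)^(p-1) ≤ π²/(4a²) (1 - a)^(1-p)`,
whose right-hand side tends to `π²/(4a²)` as `p → 1`.
-/

open Real Set Filter Topology

noncomputable section

/-- `u` is the (unique) positive solution of the one-dimensional Lane–Emden problem
`-u'' = u^p` on `(-1,1)` with `u(-1) = u(1) = 0`; it is even, positive on `(-1,1)`,
decreasing on `[0,1]`, and its sup norm is attained at `0`. -/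
def IsLaneEmden (p : ℝ) (u : ℝ → ℝ) : Prop :=
  ContDiff ℝ 2 u ∧
  (∀ t ∈ Ioo (-1 : ℝ) 1, deriv (deriv u) t = -(u t ^ p)) ∧
  u (-1) = 0 ∧ u 1 = 0 ∧
  (∀ t ∈ Ioo (-1 : ℝ) 1, 0 < u t) ∧
  (∀ t : ℝ, u (-t) = u t) ∧
  (∀ ⦃s t : ℝ⦄, s ∈ Icc (0 : ℝ) 1 → t ∈ Icc (0 : ℝ) 1 → s ≤ t → u t ≤ u s) ∧
  (∀ t ∈ Icc (-1 : ℝ) 1, u t ≤ u 0)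

theorem hasDerivAt_mul_sin_add_deriv_mul_cos {u : ℝ → ℝ} {t : ℝ} (hu : DifferentiableAt ℝ u t)
    (hu' : DifferentiableAt ℝ (deriv u) t) (k : ℝ) :
    HasDerivAt (fun s => k * u s * sin (k * s) + deriv u s * cos (k * s))
      (cos (k * t) * (deriv (deriv u) t + k ^ 2 * u t)) t := by
  have hkt : HasDerivAt (fun s : ℝ => k * s) k t := by
    simpa using (hasDerivAt_id t).const_mul k
  have h := ((hu.hasDerivAt.const_mul k).mul ((hasDerivAt_sin (k * t)).comp t hkt)).add
    (hu'.hasDerivAt.mul ((hasDerivAt_cos (k * t)).comp t hkt))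
  exact h.congr_deriv (by simp only [Function.comp_apply]; ring)

theorem add_pos_of_deriv_deriv_add_mul_pos {u : ℝ → ℝ} (hu : Differentiable ℝ u)
    (hu' : Differentiable ℝ (deriv u)) {a : ℝ} (ha : 0 < a)
    (h : ∀ t ∈ Ioo (-a) a, 0 < deriv (deriv u) t + (π / (2 * a)) ^ 2 * u t) :
    0 < u (-a) + u a := by
  set k := π / (2 * a)
  have hk : 0 < k := by positivity
  have hka : k * a = π / 2 := by simp only [k]; field_simp
  have hV := fun t => hasDerivAt_mul_sin_add_deriv_mul_cos (hu t) (hu' t) k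
  have hmono : StrictMonoOn (fun s => k * u s * sin (k * s) + deriv u s * cos (k * s))
      (Icc (-a) a) := by
    refine strictMonoOn_of_deriv_pos (convex_Icc _ _)
      (HasDerivAt.continuousOn fun t _ => hV t) fun t ht => ?_
    rw [interior_Icc] at ht
    have hcos : 0 < cos (k * t) := by
      apply cos_pos_of_mem_Ioo
      constructor <;> nlinarith [ht.1, ht.2]
    rw [(hV t).deriv]
    exact mul_pos hcos (h t ht)
  have hends := hmono (left_mem_Icc.2 (by linarith)) (right_mem_Icc.2 (by linarith)) (by linarith)
  simp only [mul_neg, hka, sin_neg, cos_neg, sin_pi_div_two, cos_pi_div_two] at hends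
  nlinarith

theorem add_neg_of_deriv_deriv_add_mul_neg {u : ℝ → ℝ} (hu : Differentiable ℝ u)
    (hu' : Differentiable ℝ (deriv u)) {a : ℝ} (ha : 0 < a)
    (h : ∀ t ∈ Ioo (-a) a, deriv (deriv u) t + (π / (2 * a)) ^ 2 * u t < 0) :
    u (-a) + u a < 0 := by
  have := add_pos_of_deriv_deriv_add_mul_pos (u := -u) hu.neg
    (by simpa [deriv.neg'] using hu'.neg) ha fun t ht => by
      simp only [deriv.neg', Pi.neg_apply, deriv.fun_neg]
      linarith [h t ht]
  simp only [Pi.neg_apply] at this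
  linarith

namespace IsLaneEmden

variable {p : ℝ} {u : ℝ → ℝ}

theorem contDiff (h : IsLaneEmden p u) : ContDiff ℝ 2 u := h.1

theorem deriv_deriv (h : IsLaneEmden p u) {t : ℝ} (ht : t ∈ Ioo (-1) 1) :
    deriv (deriv u) t = -(u t ^ p) := h.2.1 t ht

theorem apply_neg_one (h : IsLaneEmden p u) : u (-1) = 0 := h.2.2.1

theorem apply_one (h : IsLaneEmden p u) : u 1 = 0 := h.2.2.2.1

theorem pos (h : IsLaneEmden p u) {t : ℝ} (ht : t ∈ Ioo (-1) 1) : 0 < u t := h.2.2.2.2.1 t ht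

theorem apply_neg (h : IsLaneEmden p u) (t : ℝ) : u (-t) = u t := h.2.2.2.2.2.1 t

theorem antitoneOn (h : IsLaneEmden p u) : AntitoneOn u (Icc 0 1) :=
  fun _ hs _ ht hst => h.2.2.2.2.2.2.1 hs ht hst

theorem le_apply_zero (h : IsLaneEmden p u) {t : ℝ} (ht : t ∈ Icc (-1) 1) : u t ≤ u 0 :=
  h.2.2.2.2.2.2.2 t ht

theorem differentiable (h : IsLaneEmden p u) : Differentiable ℝ u :=
  h.contDiff.differentiable (by norm_num)

theorem differentiable_deriv (h : IsLaneEmden p u) : Differentiable ℝ (deriv u) :=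
  h.contDiff.differentiable_deriv_two

theorem deriv_deriv_add_mul (h : IsLaneEmden p u) {t : ℝ} (ht : t ∈ Ioo (-1) 1) (c : ℝ) :
    deriv (deriv u) t + c * u t = u t * (c - u t ^ (p - 1)) := by
  have hut := (h.pos ht).ne'
  rw [h.deriv_deriv ht, rpow_sub_one hut]
  field_simp
  ring

theorem apply_le_apply_of_abs_le (h : IsLaneEmden p u) {s t : ℝ} (hts : |t| ≤ s) (hs : s ≤ 1) :
    u s ≤ u t := by
  have hut : u |t| = u t := by
    rcases abs_choice t with ht | ht <;> rw [ht]
    exact h.apply_neg t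
  rw [← hut]
  exact h.antitoneOn ⟨abs_nonneg t, hts.trans hs⟩ ⟨(abs_nonneg t).trans hts, hs⟩ hts

theorem pi_sq_div_four_le (h : IsLaneEmden p u) (hp : 1 ≤ p) : π ^ 2 / 4 ≤ u 0 ^ (p - 1) := by
  by_contra! hlt
  have hsum := add_pos_of_deriv_deriv_add_mul_pos h.differentiable h.differentiable_deriv one_pos
    fun t ht => by
      have hut := h.pos ht
      have hle : u t ^ (p - 1) ≤ u 0 ^ (p - 1) :=
        rpow_le_rpow hut.le (h.le_apply_zero (Ioo_subset_Icc_self ht)) (by linarith)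
      rw [h.deriv_deriv_add_mul ht]
      exact mul_pos hut (by linarith)
  rw [h.apply_neg_one, h.apply_one] at hsum
  norm_num at hsum

theorem rpow_apply_le (h : IsLaneEmden p u) (hp : 1 ≤ p) {a : ℝ} (ha : a ∈ Ioo 0 1) :
    u a ^ (p - 1) ≤ (π / (2 * a)) ^ 2 := by
  by_contra! hlt
  have hua := h.pos ⟨by linarith [ha.1], ha.2⟩
  have hsum := add_neg_of_deriv_deriv_add_mul_neg h.differentiable h.differentiable_deriv ha.1
    fun t ht => by
      have ht1 : t ∈ Ioo (-1) 1 := ⟨by linarith [ht.1, ha.2], by linarith [ht.2, ha.2]⟩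
      have hle : u a ^ (p - 1) ≤ u t ^ (p - 1) :=
        rpow_le_rpow hua.le (h.apply_le_apply_of_abs_le (abs_lt.2 ht).le ha.2.le) (by linarith)
      rw [h.deriv_deriv_add_mul ht1]
      exact mul_neg_of_pos_of_neg (h.pos ht1) (by linarith)
  rw [h.apply_neg] at hsum
  linarith

theorem one_sub_mul_apply_zero_le (h : IsLaneEmden p u) {a : ℝ} (ha : a ∈ Icc 0 1) :
    (1 - a) * u 0 ≤ u a := by
  have hconc : ConcaveOn ℝ (Icc (-1) 1) u := by
    refine concaveOn_of_deriv2_nonpos (convex_Icc _ _) h.contDiff.continuous.continuousOn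
      h.differentiable.differentiableOn h.differentiable_deriv.differentiableOn fun t ht => ?_
    rw [interior_Icc] at ht
    rw [Function.iterate_succ_apply, Function.iterate_one, h.deriv_deriv ht, neg_nonpos]
    exact (rpow_pos_of_pos (h.pos ht) p).le
  have := hconc.2 (by norm_num : (0 : ℝ) ∈ Icc (-1) 1) (by norm_num : (1 : ℝ) ∈ Icc (-1) 1)
    (sub_nonneg.2 ha.2) ha.1 (by ring)
  simpa [h.apply_one] using this

theorem rpow_apply_zero_le (h : IsLaneEmden p u) (hp : 1 ≤ p) {a : ℝ} (ha : a ∈ Ioo 0 1) :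
    u 0 ^ (p - 1) ≤ (π / (2 * a)) ^ 2 * (1 - a) ^ (1 - p) := by
  have hb : 0 < 1 - a := sub_pos.2 ha.2
  have h0 : 0 < u 0 := h.pos (by norm_num)
  have hua := h.pos ⟨by linarith [ha.1], ha.2⟩
  have hconc := h.one_sub_mul_apply_zero_le (Ioo_subset_Icc_self ha)
  calc u 0 ^ (p - 1) ≤ (u a / (1 - a)) ^ (p - 1) :=
        rpow_le_rpow h0.le ((le_div_iff₀ hb).2 (by linarith)) (by linarith)
    _ = u a ^ (p - 1) * (1 - a) ^ (1 - p) := by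
        rw [div_rpow hua.le hb.le, div_eq_mul_inv, ← rpow_neg hb.le, neg_sub]
    _ ≤ (π / (2 * a)) ^ 2 * (1 - a) ^ (1 - p) := by
        gcongr
        exact h.rpow_apply_le hp ha

end IsLaneEmden

/-- As `p → 1⁺`, `‖u_p‖_∞^(p-1) → π²/4`, the first Dirichlet eigenvalue of `-d²/dt²`
on `(-1,1)`. -/
theorem sup_norm_pow_tendsto_pi_sq_div_four
    (u : ℝ → ℝ → ℝ) (hu : ∀ p : ℝ, 1 < p → IsLaneEmden p (u p)) :
    Tendsto (fun p : ℝ => u p 0 ^ (p - 1)) (𝓝[>] (1 : ℝ)) (𝓝 (π ^ 2 / 4)) := by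
  refine tendsto_order.2 ⟨fun b hb => ?_, fun b hb => ?_⟩
  · filter_upwards [self_mem_nhdsWithin] with p hp
    exact hb.trans_le ((hu p hp).pi_sq_div_four_le hp.le)
  · have hk : Tendsto (fun a : ℝ => (π / (2 * a)) ^ 2) (𝓝[<] 1) (𝓝 (π ^ 2 / 4)) := by
      have : ContinuousAt (fun a : ℝ => (π / (2 * a)) ^ 2) 1 := by fun_prop (disch := norm_num)
      convert this.tendsto.mono_left nhdsWithin_le_nhds using 2
      ring
    obtain ⟨a, hab, ha⟩ :=
      ((hk.eventually (gt_mem_nhds hb)).and (Ioo_mem_nhdsLT zero_lt_one)).exists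
    have hlim : Tendsto (fun p : ℝ => (π / (2 * a)) ^ 2 * (1 - a) ^ (1 - p)) (𝓝[>] 1)
        (𝓝 ((π / (2 * a)) ^ 2)) := by
      have : ContinuousAt (fun p : ℝ => (π / (2 * a)) ^ 2 * (1 - a) ^ (1 - p)) 1 := by
        fun_prop (disch := linarith [ha.2])
      simpa using this.tendsto.mono_left nhdsWithin_le_nhds
    filter_upwards [hlim.eventually (gt_mem_nhds hab), self_mem_nhdsWithin] with p hpb hp
    exact ((hu p hp).rpow_apply_zero_le hp.le ha).trans_lt hpb
end
end

section
/- As p → 1⁺, the normalized solutions converge in C¹([-1,1]) to the first Dirichlet eigenfunction: sup_{t ∈ [-1,1]} |u_p(t)/‖u_p‖_∞ - cos(πt/2)| → 0 and sup_{t ∈ [-1,1]} |(u_p/‖u_p‖_∞)'(t) - (-(π/2)sin(πt/2))| → 0 as p → 1⁺. -/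
open Real Set Filter Topology

noncomputable section

/-!
Write `λ = u(0)^(p-1)`, so that `w = u / u(0)` solves `w'' = -λ w^p`, `w(0) = 1`, `w(±1) = 0`.
Comparing `u` with `cos (μ t)` through their Wronskian (Sturm) gives `(π/2)² ≤ λ`, and, on
`[-(1-η), 1-η]`, where concavity gives `u ≥ η u(0)`, also `λ η^(p-1) ≤ (π / (2(1-η)))²`; hence
`λ → (π/2)²` as `p → 1⁺`. The difference `d = w - cos (π t / 2)` solves `d'' + (π/2)² d = G` with
`d(0) = d'(0) = 0` and `|G| ≤ (π/2)² (p-1) + (λ - (π/2)²)`, and Grönwall's inequality for the energy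
`d'² + (π/2)² d²` bounds `d` and `d'` uniformly by multiples of that forcing term.
-/

theorem pos_add_of_deriv_deriv_add_sq_mul_pos {w : ℝ → ℝ} (hw : ContDiff ℝ 2 w) {μ a : ℝ}
    (ha : 0 < a) (hμa : μ * a = π / 2)
    (h : ∀ x ∈ Ioo (-a) a, 0 < deriv (deriv w) x + μ ^ 2 * w x) : 0 < w (-a) + w a := by
  have hμ : 0 < μ := pos_of_mul_pos_left (hμa ▸ by positivity) ha.le
  have hw' : ∀ x, HasDerivAt w (deriv w x) x := fun x =>
    (hw.differentiable two_ne_zero x).hasDerivAt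
  have hw'' : ∀ x, HasDerivAt (deriv w) (deriv (deriv w) x) x := fun x =>
    ((hw.iterate_deriv' 1 1).differentiable one_ne_zero x).hasDerivAt
  -- the Wronskian of `w` and `cos (μ ·)`
  set W : ℝ → ℝ := fun s => deriv w s * cos (μ * s) + μ * w s * sin (μ * s)
  have hW : ∀ x, HasDerivAt W ((deriv (deriv w) x + μ ^ 2 * w x) * cos (μ * x)) x := by
    intro x
    have hμx : HasDerivAt (fun s => μ * s) μ x := by simpa using (hasDerivAt_id x).const_mul μ
    exact (((hw'' x).mul hμx.cos).add (((hw' x).const_mul μ).mul hμx.sin)).congr_deriv (by ring)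
  have hmono : StrictMonoOn W (Icc (-a) a) := by
    refine strictMonoOn_of_deriv_pos (convex_Icc _ _)
      (fun x _ => (hW x).continuousAt.continuousWithinAt) fun x hx => ?_
    rw [interior_Icc] at hx
    rw [(hW x).deriv]
    refine mul_pos (h x hx) (cos_pos_of_mem_Ioo ⟨?_, ?_⟩)
    · nlinarith [hx.1]
    · nlinarith [hx.2]
  have hlt := hmono (left_mem_Icc.2 (by linarith)) (right_mem_Icc.2 (by linarith)) (by linarith)
  simp only [W, mul_neg, hμa, cos_neg, sin_neg, cos_pi_div_two, sin_pi_div_two] at hlt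
  nlinarith

theorem sq_add_sq_mul_sq_le_of_hasDerivAt {d D G : ℝ → ℝ} {k R : ℝ}
    (hd : ∀ t, HasDerivAt d (D t) t) (hD : ∀ t ∈ Ico (0 : ℝ) 1, HasDerivAt D (G t - k ^ 2 * d t) t)
    (hDc : ContinuousOn D (Icc 0 1)) (hG : ∀ t ∈ Ico (0 : ℝ) 1, |G t| ≤ R)
    (hd0 : d 0 = 0) (hD0 : D 0 = 0) :
    ∀ t ∈ Icc (0 : ℝ) 1, D t ^ 2 + k ^ 2 * d t ^ 2 ≤ 2 * R ^ 2 := by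
  set E : ℝ → ℝ := fun t => D t ^ 2 + k ^ 2 * d t ^ 2
  have hE_nonneg : ∀ t, 0 ≤ E t := fun t => by positivity
  have hE : ∀ t ∈ Ico (0 : ℝ) 1, HasDerivAt E (2 * D t * G t) t := by
    intro t ht
    exact (((hD t ht).pow 2).add (((hd t).pow 2).const_mul (k ^ 2))).congr_deriv (by ring)
  have hdc : Continuous d := continuous_iff_continuousAt.2 fun t => (hd t).continuousAt
  have hEc : ContinuousOn E (Icc 0 1) := (hDc.pow 2).add ((hdc.pow 2).const_mul _).continuousOn
  have hbound : ∀ t ∈ Ico (0 : ℝ) 1, ‖2 * D t * G t‖ ≤ 1 * ‖E t‖ + R ^ 2 := by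
    intro t ht
    have hG2 : G t ^ 2 ≤ R ^ 2 := sq_le_sq' (abs_le.1 (hG t ht)).1 (abs_le.1 (hG t ht)).2
    rw [Real.norm_eq_abs, Real.norm_eq_abs, abs_of_nonneg (hE_nonneg t), abs_le]
    constructor
    · nlinarith [sq_nonneg (D t + G t), sq_nonneg (k * d t)]
    · nlinarith [sq_nonneg (D t - G t), sq_nonneg (k * d t)]
  intro t ht
  have hgr := norm_le_gronwallBound_of_norm_deriv_right_le (δ := 0) hEc
    (fun x hx => (hE x hx).hasDerivWithinAt) (by simp [E, hd0, hD0]) hbound t ht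
  rw [Real.norm_eq_abs, abs_of_nonneg (hE_nonneg t), gronwallBound_of_K_ne_0 one_ne_zero] at hgr
  have hexp : exp (1 * (t - 0)) ≤ exp 1 := exp_le_exp.2 (by linarith [ht.2])
  nlinarith [exp_one_lt_d9, sq_nonneg R]

theorem abs_mul_sub_mul_rpow_le {κ l p x : ℝ} (hκ : 0 ≤ κ) (hκl : κ ≤ l) (hp : 1 ≤ p)
    (hx0 : 0 ≤ x) (hx1 : x ≤ 1) :
    |κ * x - l * x ^ p| ≤ κ * (p - 1) + (l - κ) := by
  have hbernoulli : 1 + p * (x - 1) ≤ x ^ p := by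
    simpa using one_add_mul_self_le_rpow_one_add (s := x - 1) (by linarith) hp
  have hle : x ^ p ≤ x := rpow_le_self_of_le_one hx0 hx1 hp
  have hnonneg : 0 ≤ x ^ p := rpow_nonneg hx0 p
  rw [abs_le]
  constructor
  · nlinarith [mul_le_mul_of_nonneg_left (hle.trans hx1) (sub_nonneg.2 hκl)]
  · nlinarith [mul_le_mul_of_nonneg_left hbernoulli hκ, mul_nonneg (sub_nonneg.2 hκl) hnonneg,
      mul_nonneg hκ (mul_nonneg (sub_nonneg.2 hp) hx0)]

theorem rpow_eq_rpow_sub_one_mul {x : ℝ} (hx : 0 < x) (p : ℝ) : x ^ p = x ^ (p - 1) * x := by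
  rw [rpow_sub_one hx.ne', div_mul_cancel₀ _ hx.ne']

namespace IsLaneEmden

variable {p : ℝ} {u : ℝ → ℝ}

theorem apply_zero_pos (hu : IsLaneEmden p u) : 0 < u 0 :=
  hu.2.2.2.2.1 0 ⟨by norm_num, by norm_num⟩

theorem deriv_neg (hu : IsLaneEmden p u) (t : ℝ) : deriv u (-t) = -deriv u t := by
  have ⟨_, _, _, _, _, heven, _, _⟩ := hu
  have h := deriv_comp_neg (f := u) (x := t)
  rw [show (fun x => u (-x)) = u from funext heven] at h
  linarith

theorem deriv_zero (hu : IsLaneEmden p u) : deriv u 0 = 0 := by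
  linarith [neg_zero (G := ℝ) ▸ hu.deriv_neg 0]

theorem one_sub_abs_mul_le (hu : IsLaneEmden p u) {t : ℝ} (ht : t ∈ Icc (-1 : ℝ) 1) :
    (1 - |t|) * u 0 ≤ u t := by
  obtain ⟨hC, hode, -, hright, hpos, heven, -, -⟩ := hu
  have hconc : ConcaveOn ℝ (Icc (-1 : ℝ) 1) u := by
    refine concaveOn_of_deriv2_nonpos (convex_Icc _ _) hC.continuous.continuousOn
      (hC.differentiable two_ne_zero).differentiableOn
      ((hC.iterate_deriv' 1 1).differentiable one_ne_zero).differentiableOn fun x hx => ?_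
    rw [interior_Icc] at hx
    simpa [hode x hx] using rpow_nonneg (hpos x hx).le p
  have hseg : ∀ s ∈ Icc (0 : ℝ) 1, (1 - s) * u 0 ≤ u s := fun s hs => by
    simpa [hright] using hconc.2 (show (0 : ℝ) ∈ Icc (-1) 1 by norm_num)
      (show (1 : ℝ) ∈ Icc (-1) 1 by norm_num) (by linarith [hs.2]) hs.1 (by ring)
  rcases le_total 0 t with h | h
  · simpa [abs_of_nonneg h] using hseg t ⟨h, ht.2⟩
  · simpa [abs_of_nonpos h, heven] using hseg (-t) ⟨by linarith, by linarith [ht.1]⟩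

theorem nonneg (hu : IsLaneEmden p u) {t : ℝ} (ht : t ∈ Icc (-1 : ℝ) 1) : 0 ≤ u t :=
  (mul_nonneg (by linarith [abs_le.2 ht]) hu.apply_zero_pos.le).trans (hu.one_sub_abs_mul_le ht)

theorem sq_pi_div_two_le (hp : 1 < p) (hu : IsLaneEmden p u) : (π / 2) ^ 2 ≤ u 0 ^ (p - 1) := by
  have ⟨hC, hode, hleft, hright, hpos, _, _, hmax⟩ := hu
  by_contra! hlt
  have h := pos_add_of_deriv_deriv_add_sq_mul_pos hC one_pos (mul_one _) fun x hx => ?_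
  · simp [hleft, hright] at h
  · have hx0 := hpos x hx
    have hmono : u x ^ (p - 1) ≤ u 0 ^ (p - 1) :=
      rpow_le_rpow hx0.le (hmax x (Ioo_subset_Icc_self hx)) (by linarith)
    rw [hode x hx, rpow_eq_rpow_sub_one_mul hx0]
    nlinarith

theorem rpow_sub_one_mul_rpow_sub_one_le (hp : 1 < p) (hu : IsLaneEmden p u) {η : ℝ}
    (hη0 : 0 < η) (hη1 : η < 1) : u 0 ^ (p - 1) * η ^ (p - 1) ≤ (π / (2 * (1 - η))) ^ 2 := by
  have ⟨hC, hode, _, _, hpos, _, _, _⟩ := hu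
  by_contra! hlt
  set a := 1 - η
  have ha : 0 < a := by linarith
  have h := pos_add_of_deriv_deriv_add_sq_mul_pos (w := fun s => -u s) (μ := π / (2 * a))
    hC.neg ha (by field_simp) fun x hx => ?_
  · linarith [hpos (-a) ⟨by linarith, by linarith⟩, hpos a ⟨by linarith, by linarith⟩]
  · have hxI : x ∈ Ioo (-1 : ℝ) 1 := ⟨by linarith [hx.1], by linarith [hx.2]⟩
    have hx0 := hpos x hxI
    have hηx : η * u 0 ≤ u x := by
      have := hu.one_sub_abs_mul_le (Ioo_subset_Icc_self hxI)
      nlinarith [abs_lt.2 hx, hu.apply_zero_pos]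
    have hmono : (η * u 0) ^ (p - 1) ≤ u x ^ (p - 1) :=
      rpow_le_rpow (by positivity [hu.apply_zero_pos]) hηx (by linarith)
    rw [mul_rpow hη0.le hu.apply_zero_pos.le] at hmono
    simp only [deriv.fun_neg', hode x hxI]
    rw [rpow_eq_rpow_sub_one_mul hx0]
    nlinarith

theorem abs_normalized_sub_cos_le (hp : 1 < p) (hu : IsLaneEmden p u) {t : ℝ}
    (ht : t ∈ Icc (-1 : ℝ) 1) :
    |u t / u 0 - cos (π * t / 2)| ≤ (π / 2) ^ 2 * (p - 1) + (u 0 ^ (p - 1) - (π / 2) ^ 2) ∧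
      |deriv (fun s => u s / u 0) t - (-(π / 2) * sin (π * t / 2))| ≤
        2 * ((π / 2) ^ 2 * (p - 1) + (u 0 ^ (p - 1) - (π / 2) ^ 2)) := by
  have ⟨hC, hode, _, _, hpos, heven, _, hmax⟩ := hu
  have hu0 := hu.apply_zero_pos
  set R := (π / 2) ^ 2 * (p - 1) + (u 0 ^ (p - 1) - (π / 2) ^ 2)
  rw [show deriv (fun s => u s / u 0) = fun s => deriv u s / u 0 from
    funext fun s => deriv_div_const ..]
  set d : ℝ → ℝ := fun s => u s / u 0 - cos (π * s / 2)
  set D : ℝ → ℝ := fun s => deriv u s / u 0 - (-(π / 2) * sin (π * s / 2))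
  set G : ℝ → ℝ := fun s => (π / 2) ^ 2 * (u s / u 0) - u 0 ^ (p - 1) * (u s / u 0) ^ p
  have hπs : ∀ s, HasDerivAt (fun s => π * s / 2) (π / 2) s := fun s => by
    simpa using ((hasDerivAt_id s).const_mul π).div_const 2
  have hd : ∀ s, HasDerivAt d (D s) s := fun s =>
    ((((hC.differentiable two_ne_zero) s).hasDerivAt.div_const (u 0)).sub
      (hπs s).cos).congr_deriv (by ring)
  have hD : ∀ s ∈ Ioo (-1 : ℝ) 1, HasDerivAt D (G s - (π / 2) ^ 2 * d s) s := by
    intro s hs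
    refine ((((hC.iterate_deriv' 1 1).differentiable one_ne_zero s).hasDerivAt.div_const
      (u 0)).sub (((hπs s).sin).const_mul (-(π / 2)))).congr_deriv ?_
    simp only [G, d]
    rw [Function.iterate_one, hode s hs, div_rpow (hpos s hs).le hu0.le,
      rpow_sub_one hu0.ne']
    field_simp
    ring
  have hDc : Continuous D := by
    have := hC.continuous_deriv one_le_two
    fun_prop
  have hG : ∀ s ∈ Icc (-1 : ℝ) 1, |G s| ≤ R := fun s hs =>
    abs_mul_sub_mul_rpow_le (by positivity) (hu.sq_pi_div_two_le hp) hp.le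
      (div_nonneg (hu.nonneg hs) hu0.le) ((div_le_one hu0).2 (hmax s hs))
  have henergy := sq_add_sq_mul_sq_le_of_hasDerivAt hd
    (fun s hs => hD s ⟨by linarith [hs.1], hs.2⟩) hDc.continuousOn
    (fun s hs => hG s ⟨by linarith [hs.1], hs.2.le⟩) (by simp [d, hu0.ne'])
    (by simp [D, hu.deriv_zero])
  have hE : D t ^ 2 + (π / 2) ^ 2 * d t ^ 2 ≤ 2 * R ^ 2 := by
    rcases le_total 0 t with h | h
    · exact henergy t ⟨h, ht.2⟩
    · have hrefl : D (-t) ^ 2 + (π / 2) ^ 2 * d (-t) ^ 2 = D t ^ 2 + (π / 2) ^ 2 * d t ^ 2 := by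
        simp only [D, d, hu.deriv_neg, heven, mul_neg, neg_div, cos_neg, sin_neg]
        ring
      exact hrefl ▸ henergy (-t) ⟨by linarith, by linarith [ht.1]⟩
  have hR : 0 ≤ R := (abs_nonneg _).trans (hG 0 (by norm_num))
  have hπ : 2 ≤ (π / 2) ^ 2 := by nlinarith [pi_gt_three]
  change |d t| ≤ R ∧ |D t| ≤ 2 * R
  constructor
  · exact abs_le_of_sq_le_sq (by nlinarith [sq_nonneg (D t), sq_nonneg (d t)]) hR
  · exact abs_le_of_sq_le_sq (by nlinarith [sq_nonneg (d t)]) (by linarith)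

end IsLaneEmden

theorem tendsto_rpow_sub_one_nhdsGT_one {u : ℝ → ℝ → ℝ}
    (hu : ∀ p : ℝ, 1 < p → IsLaneEmden p (u p)) :
    Tendsto (fun p => u p 0 ^ (p - 1)) (𝓝[>] 1) (𝓝 ((π / 2) ^ 2)) := by
  have hp : ∀ᶠ p in 𝓝[>] (1 : ℝ), 1 < p := self_mem_nhdsWithin
  refine tendsto_order.2 ⟨fun b hb => hp.mono fun p hp =>
    hb.trans_le ((hu p hp).sq_pi_div_two_le hp), fun b hb => ?_⟩
  obtain ⟨η, ⟨hη0, hη1⟩, hηb⟩ : ∃ η ∈ Ioo (0 : ℝ) 1, (π / (2 * (1 - η))) ^ 2 < b := by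
    have hc : ContinuousAt (fun η : ℝ => (π / (2 * (1 - η))) ^ 2) 0 :=
      ContinuousAt.pow (continuousAt_const.div (by fun_prop) (by norm_num)) 2
    refine (((hc.eventually (gt_mem_nhds (by simpa using hb))).filter_mono
      nhdsWithin_le_nhds).and (Ioo_mem_nhdsGT one_pos)).exists.imp fun η h => ⟨h.2, h.1⟩
  have hc : ContinuousAt (fun p : ℝ => (π / (2 * (1 - η))) ^ 2 / η ^ (p - 1)) 1 :=
    continuousAt_const.div ((continuousAt_const_rpow hη0.ne').comp (by fun_prop))
      (rpow_pos_of_pos hη0 _).ne'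
  filter_upwards [hp, (hc.eventually (gt_mem_nhds (by simpa using hηb))).filter_mono
    nhdsWithin_le_nhds] with p hp hpb
  exact ((le_div_iff₀ (rpow_pos_of_pos hη0 _)).2
    ((hu p hp).rpow_sub_one_mul_rpow_sub_one_le hp hη0 hη1)).trans_lt hpb

/-- As `p → 1⁺`, `u_p / ‖u_p‖_∞ → cos(π t / 2)` in `C¹([-1,1])`. -/
theorem normalized_convergence_to_first_eigenfunction
    (u : ℝ → ℝ → ℝ) (hu : ∀ p : ℝ, 1 < p → IsLaneEmden p (u p)) :
    ∀ ε > (0 : ℝ), ∃ δ > (0 : ℝ), ∀ p : ℝ, 1 < p → p < 1 + δ →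
      ∀ t ∈ Icc (-1 : ℝ) 1,
        |u p t / u p 0 - Real.cos (π * t / 2)| < ε ∧
        |deriv (fun s : ℝ => u p s / u p 0) t - (-(π / 2) * Real.sin (π * t / 2))| < ε := by
  intro ε hε
  have hR : Tendsto (fun p => (π / 2) ^ 2 * (p - 1) + (u p 0 ^ (p - 1) - (π / 2) ^ 2))
      (𝓝[>] 1) (𝓝 0) := by
    have hlin : Tendsto (fun p : ℝ => (π / 2) ^ 2 * (p - 1)) (𝓝[>] 1) (𝓝 0) := by
      have : ContinuousAt (fun p : ℝ => (π / 2) ^ 2 * (p - 1)) 1 := by fun_prop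
      simpa using this.tendsto.mono_left nhdsWithin_le_nhds
    have := hlin.add ((tendsto_rpow_sub_one_nhdsGT_one hu).sub_const ((π / 2) ^ 2))
    rwa [sub_self, add_zero] at this
  obtain ⟨b, hb1, hb⟩ :=
    mem_nhdsGT_iff_exists_Ioo_subset.1 (hR.eventually (gt_mem_nhds (half_pos hε)))
  refine ⟨b - 1, by linarith [mem_Ioi.1 hb1], fun p hp1 hpb t ht => ?_⟩
  have hRp : _ < ε / 2 := hb ⟨hp1, by linarith⟩
  obtain ⟨h0, h1⟩ := (hu p hp1).abs_normalized_sub_cos_le hp1 ht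
  exact ⟨by linarith, by linarith⟩
end
end
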